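/- Let f : ℤ → ℂ and let n ≥ 1. Assume the Toeplitz matrices T_n(f) and T_{n+1}(f) are invertible. Then ( 1 − U⁻_n · Ũ⁻_n ) · V⁺_{n+1} = V⁺_n, where U⁻_n is the last component of T_n(f)^{−1} f⁺, Ũ⁻_n is the last component of (T_n(f)ᵀ)^{−1} f̃⁺, and V⁺_m := (T_m(f)^{−1})_{1,1}. -/

import Mathlib

open scoped BigOperators
open Matrix

/-- The `m × m` Toeplitz matrix `T_m(f)` with `(i,j)` entry `f(i-j)`. -/
noncomputable def Tmat (f : ℤ → ℂ) (m : ℕ) : Matrix (Fin m) (Fin m) ℂ :=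
  Matrix.of fun i j : Fin m => f (((i : ℕ) : ℤ) - ((j : ℕ) : ℤ))

/-- The vector `f⁺ = (f(1), …, f(m))`. -/
def fplus (f : ℤ → ℂ) (m : ℕ) : Fin m → ℂ := fun i => f (((i : ℕ) : ℤ) + 1)

/-- The vector `f̃⁺ = (f(-1), …, f(-m))`. -/
def ftplus (f : ℤ → ℂ) (m : ℕ) : Fin m → ℂ := fun i => f (-(((i : ℕ) : ℤ) + 1))

/-!
Let `A = T_{n+1}(f)`, `B = T_n(f)`, `J` the reversal of coordinates, and `w` the first column
of `A⁻¹`, so `A w = e₀` and `w₀ = V⁺_{n+1}`. Deleting the first row and column of `A` leaves `B`,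
the rest of the deleted column being `f⁺`; so rows `1, …, n` of `A w = e₀` read
`B (w₁, …, wₙ) = -w₀ f⁺`, whence `wₙ = -w₀ U⁻_n`. Deleting the last row and column of `A` also
leaves `B`, the rest of the deleted column now being `J f̃⁺`; rows `0, …, n-1` then give
`w₀ = V⁺_n - wₙ (B⁻¹ J f̃⁺)₀`. As `B` is persymmetric (`J B J = Bᵀ`), `(B⁻¹ J f̃⁺)₀ = Ũ⁻_n`,
and eliminating `wₙ` gives `(1 - U⁻_n Ũ⁻_n) w₀ = V⁺_n`.
-/

theorem Matrix.eq_inv_mulVec_of_mulVec_eq {ι K : Type*} [Fintype ι] [DecidableEq ι] [CommRing K]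
    {A : Matrix ι ι K} (hA : IsUnit A) {v u : ι → K} (h : A *ᵥ v = u) : v = A⁻¹ *ᵥ u := by
  rw [← h, mulVec_mulVec, nonsing_inv_mul _ ((isUnit_iff_isUnit_det A).1 hA), one_mulVec]

theorem Matrix.mulVec_inv_col {ι K : Type*} [Fintype ι] [DecidableEq ι] [CommRing K]
    {A : Matrix ι ι K} (hA : IsUnit A) (j : ι) : A *ᵥ (fun i => A⁻¹ i j) = Pi.single j 1 := by
  rw [← col_apply', ← mulVec_single_one, mulVec_mulVec,
    mul_nonsing_inv _ ((isUnit_iff_isUnit_det A).1 hA), one_mulVec]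

section Toeplitz

variable (f : ℤ → ℂ) {n : ℕ}

theorem Tmat_transpose : (Tmat f n)ᵀ = (Tmat f n).submatrix Fin.revPerm Fin.revPerm := by
  ext i j
  simp only [Tmat, transpose_apply, submatrix_apply, of_apply, Fin.revPerm_apply, Fin.val_rev]
  congr 1
  omega

theorem Tmat_succ_mulVec_succ (w : Fin (n + 1) → ℂ) (i : Fin n) :
    (Tmat f (n + 1) *ᵥ w) i.succ = fplus f n i * w 0 + (Tmat f n *ᵥ Fin.tail w) i := by
  simp [mulVec, dotProduct, Fin.sum_univ_succ, Tmat, fplus, Fin.tail]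

theorem Tmat_succ_mulVec_castSucc (w : Fin (n + 1) → ℂ) (i : Fin n) :
    (Tmat f (n + 1) *ᵥ w) i.castSucc =
      (Tmat f n *ᵥ Fin.init w) i + ftplus f n i.rev * w (Fin.last n) := by
  simp only [mulVec, dotProduct, Fin.sum_univ_castSucc, Tmat, ftplus, of_apply, Fin.init,
    Fin.val_castSucc, Fin.val_last, Fin.val_rev]
  congr 3
  omega

variable {f}

theorem Tmat_inv_col_zero_tail (hB : IsUnit (Tmat f n)) (hA : IsUnit (Tmat f (n + 1))) :
    Fin.tail (fun i => (Tmat f (n + 1))⁻¹ i 0) =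
      -(Tmat f (n + 1))⁻¹ 0 0 • ((Tmat f n)⁻¹ *ᵥ fplus f n) := by
  rw [← mulVec_smul]
  refine eq_inv_mulVec_of_mulVec_eq hB (funext fun i => ?_)
  have hrow := congrFun (mulVec_inv_col hA 0) i.succ
  rw [Tmat_succ_mulVec_succ, Pi.single_apply, if_neg (Fin.succ_ne_zero i)] at hrow
  simp only [Pi.smul_apply, smul_eq_mul]
  linear_combination hrow

theorem Tmat_inv_zero_zero [NeZero n] (hB : IsUnit (Tmat f n)) (hA : IsUnit (Tmat f (n + 1))) :
    (Tmat f (n + 1))⁻¹ 0 0 = (Tmat f n)⁻¹ 0 0 -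
      (Tmat f (n + 1))⁻¹ (Fin.last n) 0 * ((Tmat f n)⁻¹ *ᵥ (ftplus f n ∘ Fin.rev)) 0 := by
  have hinit : Fin.init (fun i => (Tmat f (n + 1))⁻¹ i 0) = (Tmat f n)⁻¹ *ᵥ
      (Pi.single 0 1 - (Tmat f (n + 1))⁻¹ (Fin.last n) 0 • (ftplus f n ∘ Fin.rev)) := by
    refine eq_inv_mulVec_of_mulVec_eq hB (funext fun i => ?_)
    have hrow := congrFun (mulVec_inv_col hA 0) i.castSucc
    rw [Tmat_succ_mulVec_castSucc] at hrow
    simp only [Pi.sub_apply, Pi.smul_apply, smul_eq_mul, Function.comp_apply, Pi.single_apply,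
      Fin.castSucc_eq_zero_iff] at hrow ⊢
    linear_combination hrow
  have hzero := congrFun hinit 0
  rw [mulVec_sub, mulVec_smul, mulVec_single_one] at hzero
  simpa [Fin.init] using hzero

theorem Tmat_transpose_inv_mulVec_ftplus (i : Fin n) :
    ((Tmat f n)ᵀ⁻¹ *ᵥ ftplus f n) i = ((Tmat f n)⁻¹ *ᵥ (ftplus f n ∘ Fin.rev)) i.rev := by
  rw [Tmat_transpose, inv_submatrix_equiv, submatrix_mulVec_equiv]
  rfl

end Toeplitz

/-- Identity (3.9) of Tracy–Widom: `(1 - U⁻_n Ũ⁻_n) V⁺_{n+1} = V⁺_n`, where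
`U⁻_n` is the last component of `T_n(f)⁻¹ f⁺`, `Ũ⁻_n` is the last component of
`(T_n(f)ᵀ)⁻¹ f̃⁺`, and `V⁺_m` is the upper-left entry of `T_m(f)⁻¹`. -/
theorem toeplitz_UV1_identity (f : ℤ → ℂ) (n : ℕ) (hn : 1 ≤ n)
    (h1 : IsUnit (Tmat f n)) (h2 : IsUnit (Tmat f (n + 1))) :
    (1 - ((Tmat f n)⁻¹ *ᵥ fplus f n) ⟨n - 1, by omega⟩ *
          (((Tmat f n)ᵀ)⁻¹ *ᵥ ftplus f n) ⟨n - 1, by omega⟩) *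
        (Tmat f (n + 1))⁻¹ ⟨0, by omega⟩ ⟨0, by omega⟩ =
      (Tmat f n)⁻¹ ⟨0, by omega⟩ ⟨0, by omega⟩ := by
  have : NeZero n := ⟨by omega⟩
  have hrev : (⟨n - 1, by omega⟩ : Fin n) = Fin.rev 0 := Fin.ext (by simp)
  have hsucc : (Fin.rev (0 : Fin n)).succ = Fin.last n :=
    Fin.ext (by simp only [Fin.val_succ, Fin.val_rev, Fin.val_zero, Fin.val_last]; omega)
  have htail := congrFun (Tmat_inv_col_zero_tail h1 h2) (Fin.rev 0)
  rw [Fin.tail, hsucc, Pi.smul_apply, smul_eq_mul] at htail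
  rw [hrev, Tmat_transpose_inv_mulVec_ftplus, Fin.rev_rev]
  change _ * (Tmat f (n + 1))⁻¹ 0 0 = (Tmat f n)⁻¹ 0 0
  linear_combination Tmat_inv_zero_zero h1 h2 -
    ((Tmat f n)⁻¹ *ᵥ (ftplus f n ∘ Fin.rev)) 0 * htail
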